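/- arXiv:1807.06411 — 2 statements merged into one kernel-verified Lean document; each statement's English description precedes it below -/
import Mathlib

section
/- Let (A,+,∘) be a skew left brace and let r(a,b) = (-a + a∘b, (-a + a∘b)' ∘ a ∘ b). Then r is bijective and non-degenerate: for each fixed a ∈ A the map b ↦ -a + a∘b is a bijection of A, and for each fixed b ∈ A the map a ↦ (-a + a∘b)' ∘ a ∘ b is a bijection of A. -/
/-- A skew left brace: `(A,+)` and `(A,∘)` are (not necessarily abelian) groups,
where `∘` is written `*`, satisfying `a∘(b+c) = a∘b - a + a∘c`. -/
class SkewBrace (A : Type*) extends AddGroup A, Group A where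
  circ_add : ∀ a b c : A, a * (b + c) = a * b + -a + a * c

variable {A : Type*} [SkewBrace A]

/-- The map `r(a,b) = (-a + a∘b, (-a + a∘b)ʼ ∘ a ∘ b)` associated to a skew left brace. -/
def braceR : A × A → A × A := fun p =>
  (-p.1 + p.1 * p.2, (-p.1 + p.1 * p.2)⁻¹ * p.1 * p.2)

lemma sb_mul_zero (a : A) : a * (0 : A) = a := by
  have h := SkewBrace.circ_add a 0 0
  rw [add_zero] at h
  have h2 : a * 0 + (0 : A) = a * 0 + (-a + a * 0) := by
    rw [add_zero, ← add_assoc]; exact h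
  have h3 := add_left_cancel h2
  have h4 : a + (0 : A) = a + (-a + a * 0) := by rw [← h3]
  rw [add_zero, ← add_assoc, add_neg_cancel, zero_add] at h4
  exact h4.symm

lemma sb_zero_eq_one : (0 : A) = 1 := by
  have := sb_mul_zero (1 : A)
  rw [one_mul] at this
  exact this

lemma sb_key1 (a b : A) : a * (a⁻¹ + b) = -a + a * b := by
  rw [SkewBrace.circ_add, mul_inv_cancel, ← sb_zero_eq_one, zero_add]

lemma sb_key2 (a b : A) : a⁻¹ * (-a + a * b) = a⁻¹ + b := by
  rw [← sb_key1, inv_mul_cancel_left]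

lemma sb_rho_eq (a b : A) : (-a + a * b)⁻¹ * a * b = (b⁻¹ * a⁻¹ + -b⁻¹)⁻¹ := by
  apply inv_injective
  rw [inv_inv]
  have : ((-a + a * b)⁻¹ * a * b)⁻¹ = b⁻¹ * (a⁻¹ * (-a + a * b)) := by
    group
  rw [this, sb_key2, SkewBrace.circ_add, inv_mul_cancel, ← sb_zero_eq_one, add_zero]

/-- `r` is bijective and non-degenerate. -/
theorem skewBrace_r_bijective_nondegenerate (A : Type*) [SkewBrace A] :
    Function.Bijective (braceR : A × A → A × A) ∧
      (∀ a : A, Function.Bijective (fun b : A => -a + a * b)) ∧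
      (∀ b : A, Function.Bijective (fun a : A => (-a + a * b)⁻¹ * a * b)) := by
  refine ⟨?_, ?_, ?_⟩
  · rw [Function.bijective_iff_has_inverse]
    refine ⟨fun p => (p.1 * p.2 + -p.1, (p.1 * p.2 + -p.1)⁻¹ * (p.1 * p.2)), ?_, ?_⟩
    · rintro ⟨a, b⟩
      simp only [braceR]
      have h1 : (-a + a * b) * ((-a + a * b)⁻¹ * a * b) = a * b := by group
      rw [h1]
      have h2 : a * b + -(-a + a * b) = a := by
        rw [neg_add_rev, neg_neg, ← add_assoc, add_neg_cancel, zero_add]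
      rw [h2]
      have h3 : a⁻¹ * (a * b) = b := by group
      rw [h3]
    · rintro ⟨u, v⟩
      simp only [braceR]
      have h1 : -(u * v + -u) + (u * v + -u) * ((u * v + -u)⁻¹ * (u * v)) = u := by
        rw [mul_inv_cancel_left, neg_add_rev, neg_neg, add_assoc, neg_add_cancel, add_zero]
      rw [h1]
      have h2 : u⁻¹ * (u * v + -u) * ((u * v + -u)⁻¹ * (u * v)) = v := by group
      rw [h2]
  · intro a
    rw [Function.bijective_iff_has_inverse]
    refine ⟨fun b => a⁻¹ * (a + b), ?_, ?_⟩
    · intro b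
      simp only
      rw [← add_assoc, add_neg_cancel, zero_add, inv_mul_cancel_left]
    · intro b
      simp only
      rw [mul_inv_cancel_left, neg_add_cancel_left]
  · intro b
    have hfun : (fun a : A => (-a + a * b)⁻¹ * a * b)
        = fun a : A => (b⁻¹ * a⁻¹ + -b⁻¹)⁻¹ := funext fun a => sb_rho_eq a b
    rw [hfun, Function.bijective_iff_has_inverse]
    refine ⟨fun v => (b * (v⁻¹ + b⁻¹))⁻¹, ?_, ?_⟩
    · intro a
      simp only
      rw [inv_inv, add_assoc, neg_add_cancel, add_zero, mul_inv_cancel_left, inv_inv]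
    · intro v
      simp only
      rw [inv_inv, inv_mul_cancel_left, add_assoc, add_neg_cancel, add_zero, inv_inv]
end

section
/- Let A be a left brace (a skew left brace with abelian additive group) whose additive group has no elements of order two. If the operation a*b = -a + a∘b - b is associative, then A is a two-sided brace, i.e., (a+b)∘c = a∘c - c + b∘c holds for all a,b,c ∈ A. -/
/-- A (left) brace: a skew left brace with abelian additive group. The
multiplicative operation `∘` is written `*`. -/
class Brace (A : Type*) extends AddCommGroup A, Group A where
  circ_add : ∀ a b c : A, a * (b + c) = a * b + -a + a * c

/-- The ring-type multiplication `a*b = -a + a∘b - b` attached to a brace. -/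
def braceMul {A : Type*} [Brace A] (a b : A) : A := -a + a * b + -b

private lemma lc1 {α : Type*} [AddCommGroup α] {x y u v : α} (h : u = v)
    (H : x - y = u - v) : x = y := by
  rw [h, sub_self] at H
  exact sub_eq_zero.mp H

private lemma lc2 {α : Type*} [AddCommGroup α] {x y u₁ v₁ u₂ v₂ : α} (h₁ : u₁ = v₁)
    (h₂ : u₂ = v₂) (H : x - y = (u₁ - v₁) + (u₂ - v₂)) : x = y := by
  rw [h₁, h₂, sub_self, sub_self, add_zero] at H
  exact sub_eq_zero.mp H

section BraceLemmas

variable {A : Type*} [Brace A]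

private lemma brace_mul_zero (a : A) : a * 0 = a := by
  have h := Brace.circ_add a 0 0
  rw [add_zero] at h
  refine lc1 h.symm ?_
  abel

private lemma brace_one_eq_zero : (1 : A) = 0 := by
  have h := brace_mul_zero (1 : A)
  rw [one_mul] at h
  exact h.symm

private lemma brace_zero_mul (a : A) : (0 : A) * a = a := by
  rw [← brace_one_eq_zero, one_mul]

private lemma brace_mul_neg (a b : A) : a * -b = a + a + -(a * b) := by
  have h := Brace.circ_add a b (-b)
  rw [add_neg_cancel, brace_mul_zero] at h
  refine lc1 h.symm ?_
  abel

private lemma braceStar_neg (a b : A) : braceMul a (-b) = -braceMul a b := by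
  unfold braceMul
  rw [brace_mul_neg]
  abel

/-- The fundamental identity `(a∘b)⋆c = a⋆(b⋆c) + a⋆c + b⋆c` valid in any left brace. -/
private lemma brace_circG (a b c : A) :
    braceMul (a * b) c = braceMul a (braceMul b c) + braceMul a c + braceMul b c := by
  unfold braceMul
  rw [mul_assoc, Brace.circ_add a (-b + b * c) (-c), Brace.circ_add a (-b) (b * c),
    brace_mul_neg a b, brace_mul_neg a c]
  abel

end BraceLemmas

/-- If a left brace whose additive group has no elements of order two has
associative star operation, then it is a two-sided brace. -/
theorem brace_star_assoc_two_sided (A : Type*) [Brace A]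
    (h2 : ∀ x : A, x + x = 0 → x = 0)
    (hassoc : ∀ a b c : A, braceMul (braceMul a b) c = braceMul a (braceMul b c)) :
    ∀ a b c : A, (a + b) * c = a * c + -c + b * c := by
  intro a b c
  have hab : ∀ x y : A, x * y = x + y + braceMul x y := by
    intro x y; unfold braceMul; abel
  have E1 : ∀ x y : A,
      braceMul (x * y) c = braceMul (braceMul x y) c + braceMul x c + braceMul y c := by
    intro x y
    rw [brace_circG, hassoc]
  have odd : ∀ x : A, braceMul (-x) c = -braceMul x c := by
    intro x
    have h := E1 x (-x)
    rw [show x * -x = -braceMul x x from by rw [hab x (-x), braceStar_neg]; abel,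
      braceStar_neg] at h
    refine lc1 h.symm ?_
    abel
  have K : ∀ x y : A,
      braceMul (x * y) c = braceMul (x * y - (x + x)) c + braceMul x c + braceMul x c := by
    intro x y
    have h1 := E1 x y
    have hh2 := E1 x (-y)
    rw [braceStar_neg] at hh2
    rw [show x * -y = -(x * y - (x + x)) from by
      rw [hab x (-y), braceStar_neg, hab x y]; abel] at hh2
    simp only [odd] at hh2
    refine lc2 h1 hh2 ?_
    abel
  have K' : ∀ z x : A,
      braceMul z c = braceMul (z - (x + x)) c + braceMul x c + braceMul x c := by
    intro z x
    have h := K x (x⁻¹ * z)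
    rwa [mul_inv_cancel_left] at h
  have f0 : braceMul (0 : A) c = 0 := by
    unfold braceMul
    rw [brace_zero_mul]
    abel
  have double : ∀ x : A, braceMul (x + x) c = braceMul x c + braceMul x c := by
    intro x
    have h := K' (x + x) x
    rw [show x + x - (x + x) = (0 : A) from by abel, f0, zero_add] at h
    exact h
  have key : braceMul (a + b) c = braceMul a c + braceMul b c := by
    have q1 := K' (a + a + (b + b)) b
    rw [show a + a + (b + b) - (b + b) = a + a from by abel, double a] at q1
    have q2 : braceMul (a + a + (b + b)) c = braceMul (a + b) c + braceMul (a + b) c := by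
      rw [show a + a + (b + b) = (a + b) + (a + b) from by abel, double (a + b)]
    have h0 : (braceMul (a + b) c - (braceMul a c + braceMul b c)) +
        (braceMul (a + b) c - (braceMul a c + braceMul b c)) = 0 := by
      refine lc2 q2.symm q1 ?_
      abel
    have h1 := h2 _ h0
    exact sub_eq_zero.mp h1
  unfold braceMul at key
  refine lc1 key ?_
  abel
end
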